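/- Assign to each circle in a Kauffman state a dotting value in ℤ₂ (dotted = 1, undotted = 0) and suppose dotting is additive mod 2 under 2→1 bifurcations: if two circles with dottings d₁, d₂ merge into one circle with dotting d, then d = d₁ + d₂ (mod 2). Then for the maps m and Δ written in the dotted basis, every basis-to-basis term of the induced differential changes the dotted grading (number of Ẋ minus number of 1̇) by either 0 or +2; in particular, the terms 1̇⊗1̇ ↦ 1, 1̇⊗X ↦ Ẋ, X ↦ Ẋ⊗Ẋ raise it by 2. -/
import Mathlib


/-- A circle label: `(dot, isX)`, where `dot = true` means the circle is dotted
and `isX = true` means the label is `X` (else `1`).  So `(false,false) = 1`,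
`(false,true) = X`, `(true,false) = 1̇`, `(true,true) = Ẋ`. -/
abbrev DLabel := Bool × Bool

/-- The dotted grading of a single label: `+1` for `Ẋ`, `−1` for `1̇`, `0` for
undotted labels (the dotted grading of a tensor basis element `#Ẋ − #1̇` is the
sum of these). -/
def grL : DLabel → ℤ
  | (dot, isX) => if dot then (if isX then 1 else -1) else 0

/-- assume dottings are additive mod 2 under `2→1` bifurcations
(the merged circle is dotted iff exactly one input is, i.e. its dot is `xor d₁ d₂`)
and, dually, under `1→2` bifurcations (`xor d₁ d₂ = d`).  Then every
basis-to-basis term of `m` (`1·1=1`, `1·X=X·1=X`, the `X·X` term being zero) and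
of `Δ` (the terms `1 ↦ 1⊗X`, `1 ↦ X⊗1`, `X ↦ X⊗X`) changes the dotted grading
`#Ẋ − #1̇` by either `0` or `+2`; in particular the terms `1̇⊗1̇ ↦ 1`,
`1̇⊗X ↦ Ẋ` and `X ↦ Ẋ⊗Ẋ` raise it by exactly `2`. -/
theorem dotted_grading_change :
    (∀ d₁ d₂ b₁ b₂ : Bool, ¬(b₁ = true ∧ b₂ = true) →
      grL (xor d₁ d₂, b₁ || b₂) - (grL (d₁, b₁) + grL (d₂, b₂)) = 0 ∨
        grL (xor d₁ d₂, b₁ || b₂) - (grL (d₁, b₁) + grL (d₂, b₂)) = 2) ∧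
    (∀ d d₁ d₂ : Bool, xor d₁ d₂ = d →
      ((grL (d₁, false) + grL (d₂, true)) - grL (d, false) = 0 ∨
        (grL (d₁, false) + grL (d₂, true)) - grL (d, false) = 2) ∧
      ((grL (d₁, true) + grL (d₂, false)) - grL (d, false) = 0 ∨
        (grL (d₁, true) + grL (d₂, false)) - grL (d, false) = 2) ∧
      ((grL (d₁, true) + grL (d₂, true)) - grL (d, true) = 0 ∨
        (grL (d₁, true) + grL (d₂, true)) - grL (d, true) = 2)) ∧
    grL (false, false) - (grL (true, false) + grL (true, false)) = 2 ∧
    grL (true, true) - (grL (true, false) + grL (false, true)) = 2 ∧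
    (grL (true, true) + grL (true, true)) - grL (false, true) = 2 := by
  refine ⟨?_, ?_, by decide, by decide, by decide⟩ <;> decide
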